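/- arXiv:2303.14611 — 4 statements merged into one kernel-verified Lean document; each statement's English description precedes it below -/
import Mathlib

section
/- Let (μ_n) be a sequence of Borel probability measures on a compact metric space X, and let Λ be a Borel probability measure on X. Suppose that for every continuous function f : X → ℝ, the Cesàro means (1/N) Σ_{n<N} ∫ f dμ_n converge to ∫ f dΛ, and suppose moreover that for every continuous f, (1/N) Σ_{n<N} |∫ f dμ_n − ∫ f dΛ|² → 0. Then there exists a subset S ⊆ ℕ of natural density 1 such that μ_n converges weakly to Λ along S. -/
open MeasureTheory Filter Topology

/-- `S ⊆ ℕ` has natural density one. -/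
def HasDensityOne (S : Set ℕ) : Prop :=
  Tendsto (fun N : ℕ =>
    (∑ n ∈ Finset.range N, S.indicator (fun _ => (1 : ℝ)) n) / N) atTop (𝓝 1)

/-!
Weight a dense sequence `uₖ` of `C(X, ℝ)` by `2⁻ᵏ` and merge the discrepancies
`dₖ(n) = min 1 |∫ uₖ dμₙ - ∫ uₖ dΛ|²` into the single sequence `b n = ∑ₖ 2⁻ᵏ dₖ(n)`, whose
Cesàro means still tend to zero by dominated convergence for series. A nonnegative sequence
with Cesàro means tending to zero tends to zero along a set of density one (its superlevel sets
`{b ≥ 1/(j+1)}` have density zero, and a diagonal choice of thresholds glues them). Along that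
set every `dₖ` tends to zero, and convergence of `∫ f dμₙ` extends from the `uₖ` to all of
`C(X, ℝ)` because `f ↦ ∫ f dμₙ` is `1`-Lipschitz for every `n`.
-/

noncomputable def cesaroMean (b : ℕ → ℝ) (N : ℕ) : ℝ :=
  (∑ n ∈ Finset.range N, b n) / N

def HasDensityZero (E : Set ℕ) : Prop :=
  Tendsto (cesaroMean (E.indicator fun _ => 1)) atTop (𝓝 0)

lemma cesaroMean_nonneg {b : ℕ → ℝ} (hb : ∀ n, 0 ≤ b n) (N : ℕ) : 0 ≤ cesaroMean b N :=
  div_nonneg (Finset.sum_nonneg fun n _ => hb n) N.cast_nonneg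

lemma cesaroMean_le_cesaroMean {a b : ℕ → ℝ} {N : ℕ} (h : ∀ n < N, a n ≤ b n) :
    cesaroMean a N ≤ cesaroMean b N :=
  div_le_div_of_nonneg_right (Finset.sum_le_sum fun n hn => h n (Finset.mem_range.mp hn))
    N.cast_nonneg

lemma cesaroMean_const (c : ℝ) {N : ℕ} (hN : N ≠ 0) : cesaroMean (fun _ => c) N = c := by
  simp [cesaroMean, hN]

lemma cesaroMean_le_of_le {b : ℕ → ℝ} {C : ℝ} (hC : 0 ≤ C) (h : ∀ n, b n ≤ C) (N : ℕ) :
    cesaroMean b N ≤ C := by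
  rcases eq_or_ne N 0 with rfl | hN
  · simpa [cesaroMean] using hC
  · exact (cesaroMean_le_cesaroMean fun n _ => h n).trans_eq (cesaroMean_const C hN)

lemma cesaroMean_sub (a b : ℕ → ℝ) (N : ℕ) :
    cesaroMean (a - b) N = cesaroMean a N - cesaroMean b N := by
  simp [cesaroMean, Finset.sum_sub_distrib, sub_div]

lemma cesaroMean_div_const (b : ℕ → ℝ) (c : ℝ) :
    cesaroMean (fun n => b n / c) = fun N => cesaroMean b N / c := by
  ext N
  simp [cesaroMean, Finset.sum_div, div_right_comm]

lemma tendsto_cesaroMean_zero_of_le {a b : ℕ → ℝ} (ha : ∀ n, 0 ≤ a n) (hab : ∀ n, a n ≤ b n)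
    (hb : Tendsto (cesaroMean b) atTop (𝓝 0)) : Tendsto (cesaroMean a) atTop (𝓝 0) :=
  squeeze_zero (cesaroMean_nonneg ha) (fun _ => cesaroMean_le_cesaroMean fun n _ => hab n) hb

lemma tendsto_cesaroMean_tsum_zero {w : ℕ → ℝ} (hw : Summable w) {c : ℕ → ℕ → ℝ}
    (hc₀ : ∀ k n, 0 ≤ c k n) (hc₁ : ∀ k n, c k n ≤ 1)
    (h : ∀ k, Tendsto (cesaroMean (c k)) atTop (𝓝 0)) :
    Tendsto (cesaroMean fun n => ∑' k, w k * c k n) atTop (𝓝 0) := by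
  have hsum : ∀ n, Summable fun k => w k * c k n := fun n =>
    hw.norm.of_norm_bounded fun k => by
      rw [norm_mul, Real.norm_of_nonneg (hc₀ k n)]
      exact mul_le_of_le_one_right (norm_nonneg _) (hc₁ k n)
  have heq : cesaroMean (fun n => ∑' k, w k * c k n) =
      fun N => ∑' k, w k * cesaroMean (c k) N := by
    ext N
    rw [cesaroMean, ← Summable.tsum_finsetSum fun n _ => hsum n, ← tsum_div_const]
    exact tsum_congr fun k => by rw [cesaroMean, ← Finset.mul_sum, mul_div_assoc]
  rw [heq]
  simpa using tendsto_tsum_of_dominated_convergence hw.norm (fun k => (h k).const_mul (w k))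
    (Eventually.of_forall fun N k => by
      rw [norm_mul, Real.norm_of_nonneg (cesaroMean_nonneg (hc₀ k) N)]
      exact mul_le_of_le_one_right (norm_nonneg _) (cesaroMean_le_of_le zero_le_one (hc₁ k) N))

lemma HasDensityZero.hasDensityOne_compl {E : Set ℕ} (h : HasDensityZero E) :
    HasDensityOne Eᶜ := by
  have heq : ∀ᶠ N in atTop, 1 - cesaroMean (E.indicator fun _ => 1) N =
      cesaroMean (Eᶜ.indicator fun _ => 1) N := by
    filter_upwards [eventually_ne_atTop 0] with N hN
    rw [Set.indicator_compl, cesaroMean_sub, cesaroMean_const _ hN]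
  show Tendsto (cesaroMean _) atTop (𝓝 1)
  simpa only [sub_zero] using (tendsto_const_nhds.sub h).congr' heq

lemma hasDensityZero_setOf_le {b : ℕ → ℝ} (hb : ∀ n, 0 ≤ b n)
    (h : Tendsto (cesaroMean b) atTop (𝓝 0)) {ε : ℝ} (hε : 0 < ε) :
    HasDensityZero {n | ε ≤ b n} := by
  refine tendsto_cesaroMean_zero_of_le (b := fun n => b n / ε)
    (Set.indicator_nonneg fun _ _ => zero_le_one) (fun n => ?_) ?_
  · by_cases hn : ε ≤ b n
    · simpa [hn] using (one_le_div hε).mpr hn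
    · simp [hn, div_nonneg (hb n) hε.le]
  · simpa [cesaroMean_div_const] using h.div_const ε

lemma exists_monotone_tendsto_diag {α : Type*} [PseudoMetricSpace α] {f : ℕ → ℕ → α} {a : α}
    (hf : ∀ j, Tendsto (f j) atTop (𝓝 a)) :
    ∃ J : ℕ → ℕ, Monotone J ∧ Tendsto J atTop atTop ∧
      Tendsto (fun M => f (J M) M) atTop (𝓝 a) := by
  classical
  choose N hN using fun j =>
    Metric.tendsto_atTop.mp (hf j) (1 / ((j : ℝ) + 1)) Nat.one_div_pos_of_nat
  -- `J M` is the largest `j ≤ M` such that, for every `i ≤ j`, `f i` stays within `1 / (i + 1)`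
  -- of `a` from `M` on.
  let J M := Nat.findGreatest (fun j => ∀ i ≤ j, N i ≤ M) M
  have hJ_mono : Monotone J := fun M M' hM =>
    Nat.findGreatest_mono (fun _ hj i hi => (hj i hi).trans hM) hM
  have hJ_top : Tendsto J atTop atTop := tendsto_atTop.mpr fun j => by
    filter_upwards [eventually_ge_atTop j,
      eventually_ge_atTop ((Finset.range (j + 1)).sup N)] with M hjM hNM
    exact Nat.le_findGreatest hjM fun i hi =>
      (Finset.le_sup (Finset.mem_range.mpr (Nat.lt_succ_of_le hi))).trans hNM
  refine ⟨J, hJ_mono, hJ_top, ?_⟩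
  have hbound : ∀ᶠ M in atTop, dist (f (J M) M) a ≤ 1 / ((J M : ℝ) + 1) := by
    filter_upwards [eventually_ge_atTop (N 0)] with M hM
    have hJM : ∀ i ≤ J M, N i ≤ M :=
      Nat.findGreatest_spec (P := fun j => ∀ i ≤ j, N i ≤ M) (Nat.zero_le M) fun i hi => by
        obtain rfl := Nat.le_zero.mp hi
        exact hM
    exact (hN _ _ (hJM _ le_rfl)).le
  exact tendsto_iff_dist_tendsto_zero.mpr <|
    squeeze_zero' (Eventually.of_forall fun _ => dist_nonneg) hbound
      (tendsto_one_div_add_atTop_nhds_zero_nat.comp hJ_top)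

theorem exists_hasDensityOne_tendsto_zero {b : ℕ → ℝ} (hb : ∀ n, 0 ≤ b n)
    (h : Tendsto (cesaroMean b) atTop (𝓝 0)) :
    ∃ S : Set ℕ, HasDensityOne S ∧ Tendsto b (atTop ⊓ 𝓟 S) (𝓝 0) := by
  let E : ℕ → Set ℕ := fun j => {n | 1 / ((j : ℝ) + 1) ≤ b n}
  have hE : Monotone E := fun i j hij n (hn : 1 / ((i : ℝ) + 1) ≤ b n) =>
    show 1 / ((j : ℝ) + 1) ≤ b n from (Nat.one_div_le_one_div hij).trans hn
  obtain ⟨J, hJ_mono, hJ_top, hJ⟩ := exists_monotone_tendsto_diag fun j =>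
    hasDensityZero_setOf_le hb h (Nat.one_div_pos_of_nat (n := j))
  refine ⟨{n | n ∈ E (J n)}ᶜ, HasDensityZero.hasDensityOne_compl ?_, ?_⟩
  · refine squeeze_zero (cesaroMean_nonneg (Set.indicator_nonneg fun _ _ => zero_le_one))
      (fun M => cesaroMean_le_cesaroMean fun n hn => ?_) hJ
    exact Set.indicator_le_indicator_of_subset (fun k hk => hE (hJ_mono hn.le) hk)
      (fun _ => zero_le_one) n
  · refine squeeze_zero' (Eventually.of_forall hb) (eventually_inf_principal.mpr <|
      Eventually.of_forall fun n (hn : ¬1 / ((J n : ℝ) + 1) ≤ b n) => (not_le.mp hn).le)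
      ((tendsto_one_div_add_atTop_nhds_zero_nat.comp hJ_top).mono_left inf_le_left)

lemma tendsto_zero_of_tendsto_min_one {α : Type*} {l : Filter α} {g : α → ℝ}
    (h : Tendsto (fun a => min 1 (g a)) l (𝓝 0)) : Tendsto g l (𝓝 0) :=
  h.congr' <| (h.eventually_lt_const one_pos).mono fun _ ha =>
    min_eq_right ((min_lt_iff.mp ha).resolve_left (lt_irrefl 1)).le

theorem exists_hasDensityOne_forall_tendsto_zero {c : ℕ → ℕ → ℝ} (hc : ∀ k n, 0 ≤ c k n)
    (h : ∀ k, Tendsto (cesaroMean (c k)) atTop (𝓝 0)) :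
    ∃ S : Set ℕ, HasDensityOne S ∧ ∀ k, Tendsto (c k) (atTop ⊓ 𝓟 S) (𝓝 0) := by
  let d k n := min 1 (c k n)
  have hd₀ k n : 0 ≤ d k n := le_min zero_le_one (hc k n)
  have hsum n : Summable fun k => (1 / 2 : ℝ) ^ k * d k n :=
    summable_geometric_two.of_nonneg_of_le (fun k => mul_nonneg (by positivity) (hd₀ k n))
      fun k => mul_le_of_le_one_right (by positivity) (min_le_left _ _)
  obtain ⟨S, hS, hbS⟩ := exists_hasDensityOne_tendsto_zero
    (fun n => tsum_nonneg fun k => mul_nonneg (by positivity) (hd₀ k n))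
    (tendsto_cesaroMean_tsum_zero summable_geometric_two hd₀ (fun _ _ => min_le_left _ _)
      fun k => tendsto_cesaroMean_zero_of_le (hd₀ k) (fun _ => min_le_right _ _) (h k))
  refine ⟨S, hS, fun k => tendsto_zero_of_tendsto_min_one ?_⟩
  have hle n : d k n ≤ (∑' j, (1 / 2 : ℝ) ^ j * d j n) / (1 / 2) ^ k := by
    rw [le_div_iff₀' (by positivity)]
    exact (hsum n).le_tsum k fun j _ => mul_nonneg (by positivity) (hd₀ j n)
  exact squeeze_zero (hd₀ k) hle (by simpa only [zero_div] using hbS.div_const _)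

section Integral

variable {X : Type*} [TopologicalSpace X] [CompactSpace X] [MeasurableSpace X]
  [OpensMeasurableSpace X]

lemma lipschitzWith_integral_continuousMap (ν : Measure X) [IsProbabilityMeasure ν] :
    LipschitzWith 1 fun f : C(X, ℝ) => ∫ x, f x ∂ν := by
  refine LipschitzWith.of_dist_le_mul fun f g => ?_
  have hint (h : C(X, ℝ)) : Integrable h ν :=
    h.continuous.integrable_of_hasCompactSupport (HasCompactSupport.of_compactSpace _)
  rw [NNReal.coe_one, one_mul, dist_eq_norm, dist_eq_norm, ← integral_sub (hint f) (hint g)]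
  have := (BoundedContinuousFunction.mkOfCompact (f - g)).norm_integral_le_norm ν
  rwa [BoundedContinuousFunction.norm_mkOfCompact] at this

lemma tendsto_integral_of_denseRange {ι κ : Type*} {l : Filter ι} {μ : ι → Measure X}
    [∀ i, IsProbabilityMeasure (μ i)] {Λ : Measure X} [IsProbabilityMeasure Λ]
    {u : κ → C(X, ℝ)} (hu : DenseRange u)
    (h : ∀ k, Tendsto (fun i => ∫ x, u k x ∂(μ i)) l (𝓝 (∫ x, u k x ∂Λ))) (f : C(X, ℝ)) :
    Tendsto (fun i => ∫ x, f x ∂(μ i)) l (𝓝 (∫ x, f x ∂Λ)) :=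
  hu.induction_on f
    ((LipschitzWith.uniformEquicontinuous _ 1 fun i =>
        lipschitzWith_integral_continuousMap (μ i)).equicontinuous.isClosed_setOfPred_tendsto
      (lipschitzWith_integral_continuousMap Λ).continuous) h

end Integral

theorem density_one_weak_convergence_general
    {X : Type*} [MetricSpace X] [CompactSpace X] [MeasurableSpace X] [BorelSpace X]
    (μ : ℕ → Measure X) [∀ n, IsProbabilityMeasure (μ n)]
    (Λ : Measure X) [IsProbabilityMeasure Λ]
    (hvar : ∀ f : C(X, ℝ),
      Tendsto (fun N : ℕ =>
        (∑ n ∈ Finset.range N, |∫ x, f x ∂(μ n) - ∫ x, f x ∂Λ| ^ 2) / N) atTop (𝓝 0)) :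
    ∃ S : Set ℕ, HasDensityOne S ∧
      ∀ f : C(X, ℝ),
        Tendsto (fun n => ∫ x, f x ∂(μ n)) (atTop ⊓ 𝓟 S) (𝓝 (∫ x, f x ∂Λ)) := by
  obtain ⟨u, hu⟩ := TopologicalSpace.exists_dense_seq C(X, ℝ)
  obtain ⟨S, hS, hconv⟩ := exists_hasDensityOne_forall_tendsto_zero
    (c := fun k n => |∫ x, u k x ∂(μ n) - ∫ x, u k x ∂Λ| ^ 2) (fun _ _ => sq_nonneg _)
    fun k => hvar (u k)
  refine ⟨S, hS, tendsto_integral_of_denseRange hu fun k => ?_⟩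
  rw [tendsto_iff_norm_sub_tendsto_zero]
  simpa only [Real.sqrt_sq (abs_nonneg _), Real.norm_eq_abs, Real.sqrt_zero] using (hconv k).sqrt

theorem density_one_weak_convergence
    {X : Type*} [MetricSpace X] [CompactSpace X] [MeasurableSpace X] [BorelSpace X]
    (μ : ℕ → Measure X) [∀ n, IsProbabilityMeasure (μ n)]
    (Λ : Measure X) [IsProbabilityMeasure Λ]
    (hmean : ∀ f : C(X, ℝ),
      Tendsto (fun N : ℕ => (∑ n ∈ Finset.range N, ∫ x, f x ∂(μ n)) / N) atTop
        (𝓝 (∫ x, f x ∂Λ)))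
    (hvar : ∀ f : C(X, ℝ),
      Tendsto (fun N : ℕ =>
        (∑ n ∈ Finset.range N, |∫ x, f x ∂(μ n) - ∫ x, f x ∂Λ| ^ 2) / N) atTop (𝓝 0)) :
    ∃ S : Set ℕ, HasDensityOne S ∧
      ∀ f : C(X, ℝ),
        Tendsto (fun n => ∫ x, f x ∂(μ n)) (atTop ⊓ 𝓟 S) (𝓝 (∫ x, f x ∂Λ)) :=
  density_one_weak_convergence_general μ Λ hvar
end

section
/- Let (a_n^{(k)})_{n} for k ∈ ℕ be countably many sequences of nonnegative reals, each converging to 0 along some set of density 1 (depending on k). Then there is a single set S ⊆ ℕ of density 1 such that for every k, a_n^{(k)} → 0 along S. -/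
open Filter Topology

/-!
Density-one sets form a filter, so every finite intersection `T k` of the given sets has density
one, and the sets `T k` decrease. Pick strictly increasing thresholds `M k` beyond which the
proportion of `T k` in `[0, N)` exceeds `1 - 1/(k+1)`, and let `S` agree with `T k` on
`[M k, M (k+1))`. Below `N ∈ [M j, M (j+1))` the set `S` contains `T j`, so `S` has proportion
at least `1 - 1/(j+1)` there; and `S ⊆ T k` beyond `M k`.
-/

noncomputable section

-- At `N = 0` this is the junk value `0 / 0 = 0`.
def partialDensity (S : Set ℕ) (N : ℕ) : ℝ :=
  (∑ n ∈ Finset.range N, S.indicator (fun _ => (1 : ℝ)) n) / N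

lemma partialDensity_le_one (S : Set ℕ) (N : ℕ) : partialDensity S N ≤ 1 := by
  refine div_le_one_of_le₀ ?_ N.cast_nonneg
  calc ∑ n ∈ Finset.range N, S.indicator (fun _ => (1 : ℝ)) n
      ≤ ∑ _n ∈ Finset.range N, (1 : ℝ) :=
        Finset.sum_le_sum fun n _ => Set.indicator_le_self' (fun _ _ => zero_le_one) n
    _ = N := by simp

lemma partialDensity_mono {A B : Set ℕ} {N : ℕ} (h : ∀ n < N, n ∈ A → n ∈ B) :
    partialDensity A N ≤ partialDensity B N := by
  refine div_le_div_of_nonneg_right (Finset.sum_le_sum fun n hn => ?_) N.cast_nonneg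
  by_cases hA : n ∈ A
  · simp [hA, h n (Finset.mem_range.1 hn) hA]
  · simp [hA, Set.indicator_nonneg]

lemma partialDensity_add_le_inter (A B : Set ℕ) (N : ℕ) :
    partialDensity A N + partialDensity B N ≤ partialDensity (A ∩ B) N + 1 := by
  rcases N.eq_zero_or_pos with rfl | hN
  · simp [partialDensity]
  have hpointwise : ∀ n, A.indicator (fun _ => (1 : ℝ)) n + B.indicator (fun _ => 1) n
      ≤ (A ∩ B).indicator (fun _ => 1) n + 1 := by
    intro n
    by_cases hA : n ∈ A <;> by_cases hB : n ∈ B <;> simp [hA, hB]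
  have hsum := Finset.sum_le_sum fun n (_ : n ∈ Finset.range N) => hpointwise n
  simp only [Finset.sum_add_distrib, Finset.sum_const, Finset.card_range, nsmul_eq_mul,
    mul_one] at hsum
  have hN' : (0 : ℝ) < N := by exact_mod_cast hN
  rw [partialDensity, partialDensity, partialDensity, ← add_div, div_add_one hN'.ne']
  exact div_le_div_of_nonneg_right hsum hN'.le

lemma hasDensityOne_iff_partialDensity (S : Set ℕ) :
    HasDensityOne S ↔ Tendsto (partialDensity S) atTop (𝓝 1) :=
  Iff.rfl

lemma hasDensityOne_iff_forall_eventually (S : Set ℕ) :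
    HasDensityOne S ↔ ∀ k : ℕ, ∀ᶠ N in atTop, 1 - 1 / ((k : ℝ) + 1) < partialDensity S N := by
  rw [hasDensityOne_iff_partialDensity]
  refine ⟨fun h k => h.eventually (lt_mem_nhds (by simp; positivity)), fun h => ?_⟩
  refine tendsto_order.2 ⟨fun a ha => ?_, fun a ha =>
    Eventually.of_forall fun N => (partialDensity_le_one S N).trans_lt ha⟩
  obtain ⟨k, hk⟩ := exists_nat_one_div_lt (sub_pos.2 ha)
  exact (h k).mono fun N hN => by linarith

lemma hasDensityOne_univ : HasDensityOne Set.univ := by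
  refine tendsto_const_nhds.congr' ?_
  filter_upwards [eventually_ne_atTop 0] with N hN
  simp [hN]

lemma HasDensityOne.mono {A B : Set ℕ} (hA : HasDensityOne A) (hAB : A ⊆ B) :
    HasDensityOne B :=
  tendsto_of_tendsto_of_tendsto_of_le_of_le hA tendsto_const_nhds
    (fun _ => partialDensity_mono fun _ _ hn => hAB hn) (partialDensity_le_one B)

lemma HasDensityOne.inter {A B : Set ℕ} (hA : HasDensityOne A) (hB : HasDensityOne B) :
    HasDensityOne (A ∩ B) := by
  rw [hasDensityOne_iff_partialDensity] at hA hB ⊢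
  have hlower : Tendsto (fun N => partialDensity A N + partialDensity B N - 1) atTop (𝓝 1) := by
    simpa using (hA.add hB).sub_const 1
  exact tendsto_of_tendsto_of_tendsto_of_le_of_le hlower tendsto_const_nhds
    (fun N => by linarith [partialDensity_add_le_inter A B N]) (partialDensity_le_one _)

def densityOneFilter : Filter ℕ where
  sets := {S | HasDensityOne S}
  univ_sets := hasDensityOne_univ
  sets_of_superset hA hAB := HasDensityOne.mono hA hAB
  inter_sets hA hB := HasDensityOne.inter hA hB

lemma mem_densityOneFilter {S : Set ℕ} : S ∈ densityOneFilter ↔ HasDensityOne S :=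
  Iff.rfl

lemma StrictMono.exists_greatest_le {M : ℕ → ℕ} (hM : StrictMono M) {k N : ℕ} (hk : M k ≤ N) :
    ∃ j, k ≤ j ∧ M j ≤ N ∧ ∀ i, M i ≤ N → i ≤ j := by
  have hbound : ∀ i, M i ≤ N → i ≤ N := fun i hi => (hM.id_le i).trans hi
  exact ⟨Nat.findGreatest (fun i => M i ≤ N) N, Nat.le_findGreatest (hbound k hk) hk,
    Nat.findGreatest_spec (P := fun i => M i ≤ N) (hbound k hk) hk, fun i hi => Nat.le_findGreatest (hbound i hi) hi⟩

lemma exists_hasDensityOne_eventually_subset_of_antitone {T : ℕ → Set ℕ} (hT : Antitone T)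
    (hd : ∀ k, HasDensityOne (T k)) :
    ∃ S, HasDensityOne S ∧ ∀ k, ∀ᶠ n in atTop, n ∈ S → n ∈ T k := by
  obtain ⟨M, hMmono, hM⟩ := extraction_forall_of_eventually fun k =>
    eventually_forall_ge_atTop.2 ((hasDensityOne_iff_forall_eventually _).1 (hd k) k)
  refine ⟨{n | ∀ k, M k ≤ n → n ∈ T k}, ?_,
    fun k => (eventually_ge_atTop (M k)).mono fun n hn hS => hS k hn⟩
  refine (hasDensityOne_iff_forall_eventually _).2 fun k => ?_
  filter_upwards [eventually_ge_atTop (M k)] with N hN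
  obtain ⟨j, hkj, hjN, hj⟩ := hMmono.exists_greatest_le hN
  calc 1 - 1 / ((k : ℝ) + 1)
      ≤ 1 - 1 / ((j : ℝ) + 1) := sub_le_sub_left (Nat.one_div_le_one_div hkj) 1
    _ < partialDensity (T j) N := hM j N hjN
    _ ≤ partialDensity {n | ∀ k, M k ≤ n → n ∈ T k} N :=
        partialDensity_mono fun n hn hnT i hi => hT (hj i (hi.trans hn.le)) hnT

lemma exists_hasDensityOne_eventually_subset {T : ℕ → Set ℕ} (hd : ∀ k, HasDensityOne (T k)) :
    ∃ S, HasDensityOne S ∧ ∀ k, ∀ᶠ n in atTop, n ∈ S → n ∈ T k := by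
  obtain ⟨S, hS, hST⟩ := exists_hasDensityOne_eventually_subset_of_antitone
    (T := fun k => ⋂ i ∈ Set.Iic k, T i)
    (fun _ _ hkl => Set.biInter_subset_biInter_left (Set.Iic_subset_Iic.2 hkl))
    (fun k => (biInter_mem (Set.finite_Iic k)).2 fun i _ => mem_densityOneFilter.2 (hd i))
  exact ⟨S, hS, fun k => (hST k).mono fun n h hn => Set.mem_iInter₂.1 (h hn) k (Set.mem_Iic.2 le_rfl)⟩

end

theorem density_one_diagonal_general (a : ℕ → ℕ → ℝ)
    (h : ∀ k : ℕ, ∃ S : Set ℕ, HasDensityOne S ∧ Tendsto (a k) (atTop ⊓ 𝓟 S) (𝓝 0)) :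
    ∃ S : Set ℕ, HasDensityOne S ∧ ∀ k : ℕ, Tendsto (a k) (atTop ⊓ 𝓟 S) (𝓝 0) := by
  choose T hTd hTa using h
  obtain ⟨S, hS, hST⟩ := exists_hasDensityOne_eventually_subset hTd
  refine ⟨S, hS, fun k => (hTa k).mono_left (le_inf inf_le_left ?_)⟩
  exact le_principal_iff.2 (mem_inf_principal.2 (hST k))

theorem density_one_diagonal (a : ℕ → ℕ → ℝ) (ha : ∀ k n, 0 ≤ a k n)
    (h : ∀ k : ℕ, ∃ S : Set ℕ, HasDensityOne S ∧ Tendsto (a k) (atTop ⊓ 𝓟 S) (𝓝 0)) :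
    ∃ S : Set ℕ, HasDensityOne S ∧ ∀ k : ℕ, Tendsto (a k) (atTop ⊓ 𝓟 S) (𝓝 0) :=
  density_one_diagonal_general a h
end

section
/- Let f : [0,∞) → ℝ be nonnegative and nondecreasing such that the Laplace–Stieltjes transform ∫₀^∞ e^{−τλ} df(λ) converges for all τ > 0 and satisfies τ·∫₀^∞ e^{−τλ} df(λ) → A as τ → 0⁺. Then f(Λ)/Λ → A as Λ → ∞. -/
/-!
Karamata's argument. Write `T_τ g = τ ∫_{[0,∞)} e^{-τλ} g(e^{-τλ}) df(λ)`, so that the hypothesis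
reads `T_τ 1 → A`. Rescaling `τ` gives `T_τ xⁿ → A/(n+1) = A ∫₀¹ xⁿ dx`, hence
`T_τ g → A ∫₀¹ g` for polynomials `g` by linearity. As `T_τ` is monotone in `g`, squeezing
between polynomials (Weierstrass) extends this to continuous `g`, and squeezing between
continuous functions extends it to `g = 1_{[1/e,1]}(x)/x`, with `∫₀¹ g = 1`. For this `g`,
`T_τ g = τ (f(1/τ) - f(0⁻))`, and `τ = 1/Λ` gives the theorem.
-/

open MeasureTheory Filter Topology

open Real Set Polynomial

theorem tendsto_of_squeeze_family {α ι β : Type*} [TopologicalSpace β] [Preorder β]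
    [OrderTopology β] {l : Filter α} {p : Filter ι} [p.NeBot] {u : α → β} {v w : ι → α → β}
    {b c : ι → β} {a : β}
    (hv : ∀ᶠ i in p, Tendsto (v i) l (𝓝 (b i)) ∧ v i ≤ᶠ[l] u)
    (hw : ∀ᶠ i in p, Tendsto (w i) l (𝓝 (c i)) ∧ u ≤ᶠ[l] w i)
    (hb : Tendsto b p (𝓝 a)) (hc : Tendsto c p (𝓝 a)) : Tendsto u l (𝓝 a) := by
  refine tendsto_order.2 ⟨fun a' ha' => ?_, fun a' ha' => ?_⟩
  · obtain ⟨i, ⟨hvi, hvu⟩, hbi⟩ := (hv.and ((tendsto_order.1 hb).1 a' ha')).exists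
    filter_upwards [(tendsto_order.1 hvi).1 a' hbi, hvu] with x h₁ h₂ using h₁.trans_le h₂
  · obtain ⟨i, ⟨hwi, huw⟩, hci⟩ := (hw.and ((tendsto_order.1 hc).2 a' ha')).exists
    filter_upwards [(tendsto_order.1 hwi).2 a' hci, huw] with x h₁ h₂ using h₂.trans_lt h₁

namespace Karamata

noncomputable def transform (μ : Measure ℝ) (g : ℝ → ℝ) (τ : ℝ) : ℝ :=
  τ * ∫ l in Ici 0, exp (-τ * l) * g (exp (-τ * l)) ∂μ

variable {μ : Measure ℝ} {A τ s δ x : ℝ} {g g₁ g₂ : ℝ → ℝ}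

lemma exp_neg_mul_mem_Ioc (hτ : 0 ≤ τ) {l : ℝ} (hl : l ∈ Ici 0) : exp (-τ * l) ∈ Ioc 0 1 :=
  ⟨exp_pos _, exp_le_one_iff.2 (by nlinarith [mem_Ici.1 hl])⟩

lemma integrableOn_transform_of_bounded
    (hint : ∀ τ : ℝ, 0 < τ → IntegrableOn (fun l => exp (-τ * l)) (Ici 0) μ) (hτ : 0 < τ)
    (hg : Measurable g) {M : ℝ} (hM : ∀ x ∈ Ioc 0 1, |g x| ≤ M) :
    IntegrableOn (fun l => exp (-τ * l) * g (exp (-τ * l))) (Ici 0) μ := by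
  refine ((hint τ hτ).mul_const M).mono' ?_ ?_
  · exact (measurable_exp.comp (measurable_const.mul measurable_id)).mul
      (hg.comp (measurable_exp.comp (measurable_const.mul measurable_id))) |>.aestronglyMeasurable
  · filter_upwards [self_mem_ae_restrict measurableSet_Ici] with l hl
    rw [norm_mul, Real.norm_of_nonneg (exp_pos _).le, Real.norm_eq_abs]
    exact mul_le_mul_of_nonneg_left (hM _ (exp_neg_mul_mem_Ioc hτ.le hl)) (exp_pos _).le

lemma integrableOn_transform_of_continuous
    (hint : ∀ τ : ℝ, 0 < τ → IntegrableOn (fun l => exp (-τ * l)) (Ici 0) μ) (hτ : 0 < τ)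
    (hg : Continuous g) :
    IntegrableOn (fun l => exp (-τ * l) * g (exp (-τ * l))) (Ici 0) μ := by
  obtain ⟨M, hM⟩ := (isCompact_Icc (a := (0 : ℝ)) (b := 1)).exists_bound_of_continuousOn
    hg.continuousOn
  exact integrableOn_transform_of_bounded hint hτ hg.measurable fun x hx =>
    hM x (Ioc_subset_Icc_self hx)

lemma transform_one : transform μ 1 = fun τ => τ * ∫ l in Ici 0, exp (-τ * l) ∂μ := by
  funext τ
  simp only [transform, Pi.one_apply, mul_one]

lemma transform_mono (hτ : 0 ≤ τ)
    (h₁ : IntegrableOn (fun l => exp (-τ * l) * g₁ (exp (-τ * l))) (Ici 0) μ)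
    (h₂ : IntegrableOn (fun l => exp (-τ * l) * g₂ (exp (-τ * l))) (Ici 0) μ)
    (hg : ∀ x ∈ Ioc 0 1, g₁ x ≤ g₂ x) : transform μ g₁ τ ≤ transform μ g₂ τ := by
  refine mul_le_mul_of_nonneg_left (setIntegral_mono_on h₁ h₂ measurableSet_Ici fun l hl => ?_) hτ
  exact mul_le_mul_of_nonneg_left (hg _ (exp_neg_mul_mem_Ioc hτ hl)) (exp_pos _).le

lemma transform_add
    (h₁ : IntegrableOn (fun l => exp (-τ * l) * g₁ (exp (-τ * l))) (Ici 0) μ)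
    (h₂ : IntegrableOn (fun l => exp (-τ * l) * g₂ (exp (-τ * l))) (Ici 0) μ) :
    transform μ (fun x => g₁ x + g₂ x) τ = transform μ g₁ τ + transform μ g₂ τ := by
  simp only [transform, mul_add]
  rw [integral_add h₁ h₂, mul_add]

lemma transform_const_mul (a : ℝ) :
    transform μ (fun x => a * g x) τ = a * transform μ g τ := by
  simp only [transform, mul_left_comm _ a, integral_const_mul]

lemma transform_pow (n : ℕ) :
    transform μ (· ^ n) τ = ((n : ℝ) + 1)⁻¹ * transform μ 1 (((n : ℝ) + 1) * τ) := by
  have hexp : ∀ l, exp (-τ * l) * exp (-τ * l) ^ n = exp (-(((n : ℝ) + 1) * τ) * l) * 1 := by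
    intro l
    rw [← exp_nat_mul, ← exp_add, mul_one]
    ring_nf
  simp only [transform, Pi.one_apply, hexp]
  field_simp

theorem tendsto_transform_pow (habel : Tendsto (transform μ 1) (𝓝[>] 0) (𝓝 A)) (n : ℕ) :
    Tendsto (transform μ (· ^ n)) (𝓝[>] 0) (𝓝 (A * ∫ x in (0 : ℝ)..1, x ^ n)) := by
  have hn : (0 : ℝ) < n + 1 := by positivity
  have hdil : Tendsto (fun τ : ℝ => ((n : ℝ) + 1) * τ) (𝓝[>] 0) (𝓝[>] 0) :=
    tendsto_iff_comap.2 (comap_mulLeft_nhdsGT_zero hn).ge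
  have hlim : A * ∫ x in (0 : ℝ)..1, x ^ n = ((n : ℝ) + 1)⁻¹ * A := by
    rw [integral_pow]
    simp [div_eq_inv_mul, mul_comm]
  rw [funext fun τ => transform_pow (μ := μ) (τ := τ) n, hlim]
  exact (habel.comp hdil).const_mul _

theorem tendsto_transform_polynomial
    (hint : ∀ τ : ℝ, 0 < τ → IntegrableOn (fun l => exp (-τ * l)) (Ici 0) μ)
    (habel : Tendsto (transform μ 1) (𝓝[>] 0) (𝓝 A)) (p : ℝ[X]) :
    Tendsto (transform μ fun x => p.eval x) (𝓝[>] 0) (𝓝 (A * ∫ x in (0 : ℝ)..1, p.eval x)) := by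
  induction p using Polynomial.induction_on' with
  | add p q hp hq =>
    simp only [eval_add]
    rw [intervalIntegral.integral_add (p.continuous.intervalIntegrable _ _)
      (q.continuous.intervalIntegrable _ _), mul_add]
    refine (hp.add hq).congr' ?_
    filter_upwards [self_mem_nhdsWithin] with τ (hτ : 0 < τ)
    exact (transform_add (integrableOn_transform_of_continuous hint hτ p.continuous)
      (integrableOn_transform_of_continuous hint hτ q.continuous)).symm
  | monomial n a =>
    simp only [eval_monomial, intervalIntegral.integral_const_mul]
    rw [funext fun τ => transform_const_mul (μ := μ) (τ := τ) (g := (· ^ n)) a, mul_left_comm]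
    exact (tendsto_transform_pow habel n).const_mul a

theorem tendsto_transform_of_squeeze
    (hint : ∀ τ : ℝ, 0 < τ → IntegrableOn (fun l => exp (-τ * l)) (Ici 0) μ)
    (hg : ∀ τ : ℝ, 0 < τ → IntegrableOn (fun l => exp (-τ * l) * g (exp (-τ * l))) (Ici 0) μ)
    {ι : Type*} {p : Filter ι} [p.NeBot] {g₁ g₂ : ι → ℝ → ℝ} {L : ℝ}
    (hcont₁ : ∀ i, Continuous (g₁ i)) (hcont₂ : ∀ i, Continuous (g₂ i))
    (hlim₁ : ∀ i, Tendsto (transform μ (g₁ i)) (𝓝[>] 0) (𝓝 (A * ∫ x in (0 : ℝ)..1, g₁ i x)))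
    (hlim₂ : ∀ i, Tendsto (transform μ (g₂ i)) (𝓝[>] 0) (𝓝 (A * ∫ x in (0 : ℝ)..1, g₂ i x)))
    (hle : ∀ᶠ i in p, ∀ x ∈ Ioc 0 1, g₁ i x ≤ g x ∧ g x ≤ g₂ i x)
    (hL₁ : Tendsto (fun i => ∫ x in (0 : ℝ)..1, g₁ i x) p (𝓝 L))
    (hL₂ : Tendsto (fun i => ∫ x in (0 : ℝ)..1, g₂ i x) p (𝓝 L)) :
    Tendsto (transform μ g) (𝓝[>] 0) (𝓝 (A * L)) := by
  refine tendsto_of_squeeze_family (v := fun i => transform μ (g₁ i))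
    (w := fun i => transform μ (g₂ i)) ?_ ?_ (hL₁.const_mul A) (hL₂.const_mul A)
  · filter_upwards [hle] with i hi
    refine ⟨hlim₁ i, ?_⟩
    filter_upwards [self_mem_nhdsWithin] with τ (hτ : 0 < τ)
    exact transform_mono hτ.le (integrableOn_transform_of_continuous hint hτ (hcont₁ i))
      (hg τ hτ) fun x hx => (hi x hx).1
  · filter_upwards [hle] with i hi
    refine ⟨hlim₂ i, ?_⟩
    filter_upwards [self_mem_nhdsWithin] with τ (hτ : 0 < τ)
    exact transform_mono hτ.le (hg τ hτ)
      (integrableOn_transform_of_continuous hint hτ (hcont₂ i)) fun x hx => (hi x hx).2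

theorem tendsto_transform_of_continuous
    (hint : ∀ τ : ℝ, 0 < τ → IntegrableOn (fun l => exp (-τ * l)) (Ici 0) μ)
    (habel : Tendsto (transform μ 1) (𝓝[>] 0) (𝓝 A)) (hg : Continuous g) :
    Tendsto (transform μ g) (𝓝[>] 0) (𝓝 (A * ∫ x in (0 : ℝ)..1, g x)) := by
  have hq (ε : ℝ) : ∃ q : ℝ[X], 0 < ε → ∀ x ∈ Icc (0 : ℝ) 1, |q.eval x - g x| < ε := by
    by_cases hε : 0 < ε
    · obtain ⟨q, hq⟩ := exists_polynomial_near_of_continuousOn 0 1 g hg.continuousOn ε hε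
      exact ⟨q, fun _ => hq⟩
    · exact ⟨0, fun h => absurd h hε⟩
  choose q hq using hq
  have hunif (s : ℝ) : TendstoUniformlyOn (fun ε x => (q ε + C (s * ε)).eval x) g (𝓝[>] 0)
      (uIcc 0 1) := by
    refine Metric.tendstoUniformlyOn_iff.2 fun δ hδ => ?_
    filter_upwards [Ioo_mem_nhdsGT (show (0 : ℝ) < δ / (|s| + 1) by positivity)]
      with ε ⟨hε, hεδ⟩ x hx
    rw [uIcc_of_le zero_le_one] at hx
    have hsε : |s * ε| = |s| * ε := by rw [abs_mul, abs_of_pos hε]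
    calc dist (g x) ((q ε + C (s * ε)).eval x)
        ≤ |(q ε).eval x - g x| + |s * ε| := by
          rw [dist_comm, Real.dist_eq, eval_add, eval_C, add_sub_right_comm]
          exact abs_add_le _ _
      _ < (|s| + 1) * ε := by rw [hsε]; linarith [hq ε hε x hx]
      _ < δ := (lt_div_iff₀' (by positivity)).1 hεδ
  have hintegral (s : ℝ) := (hunif s).tendsto_intervalIntegral_of_continuousOn (μ := volume)
    (Eventually.of_forall fun ε => (q ε + C (s * ε)).continuous.continuousOn)
  refine tendsto_transform_of_squeeze hint
    (fun τ hτ => integrableOn_transform_of_continuous hint hτ hg)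
    (fun ε => (q ε + C (-1 * ε)).continuous) (fun ε => (q ε + C (1 * ε)).continuous)
    (fun ε => tendsto_transform_polynomial hint habel _)
    (fun ε => tendsto_transform_polynomial hint habel _) ?_ (hintegral (-1)) (hintegral 1)
  filter_upwards [self_mem_nhdsWithin] with ε (hε : 0 < ε) x hx
  have := abs_sub_lt_iff.1 (hq ε hε x (Ioc_subset_Icc_self hx))
  simp only [eval_add, eval_C]
  constructor <;> linarith

noncomputable def cutoff : ℝ → ℝ := indicator (Icc (exp (-1)) 1) (·⁻¹)

/-- `s = 0` gives a lower and `s = 1` an upper continuous approximation of `cutoff`. -/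
noncomputable def cutoffApprox (s δ x : ℝ) : ℝ :=
  max 0 (min 1 (s + (x - exp (-1)) / δ)) * (max x (exp (-1)))⁻¹

lemma continuous_cutoffApprox (s δ : ℝ) : Continuous (cutoffApprox s δ) := by
  unfold cutoffApprox
  exact (continuous_const.max (continuous_const.min
    (continuous_const.add ((continuous_id.sub continuous_const).div_const δ)))).mul
    ((continuous_id.max continuous_const).inv₀ fun x => (lt_max_of_lt_right (exp_pos _)).ne')

lemma abs_cutoffApprox_le (s δ x : ℝ) : |cutoffApprox s δ x| ≤ exp 1 := by
  have hmax : 0 < max x (exp (-1)) := lt_max_of_lt_right (exp_pos _)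
  rw [cutoffApprox, abs_mul, abs_of_nonneg (le_max_left _ _), abs_of_pos (inv_pos.2 hmax),
    ← inv_inv (exp 1), ← exp_neg]
  calc _ ≤ 1 * (max x (exp (-1)))⁻¹ :=
        mul_le_mul_of_nonneg_right (max_le zero_le_one (min_le_left _ _)) (inv_pos.2 hmax).le
    _ ≤ (exp (-1))⁻¹ := by rw [one_mul]; exact inv_anti₀ (exp_pos _) (le_max_right _ _)

lemma cutoffApprox_zero_le (hδ : 0 < δ) (hx : x ∈ Ioc 0 1) : cutoffApprox 0 δ x ≤ cutoff x := by
  by_cases hc : exp (-1) ≤ x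
  · rw [cutoff, indicator_of_mem (mem_Icc.2 ⟨hc, hx.2⟩), cutoffApprox, max_eq_left hc]
    exact mul_le_of_le_one_left (inv_pos.2 hx.1).le (max_le zero_le_one (min_le_left _ _))
  · have : (x - exp (-1)) / δ ≤ 0 := div_nonpos_of_nonpos_of_nonneg (by linarith) hδ.le
    rw [cutoff, indicator_of_notMem fun h => hc h.1, cutoffApprox, zero_add,
      max_eq_left ((min_le_right _ _).trans this), zero_mul]

lemma cutoff_le_cutoffApprox_one (hδ : 0 < δ) (hx : x ∈ Ioc 0 1) :
    cutoff x ≤ cutoffApprox 1 δ x := by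
  by_cases hc : exp (-1) ≤ x
  · have : 1 ≤ 1 + (x - exp (-1)) / δ := le_add_of_nonneg_right (div_nonneg (by linarith) hδ.le)
    rw [cutoff, indicator_of_mem (mem_Icc.2 ⟨hc, hx.2⟩), cutoffApprox, max_eq_left hc,
      min_eq_left this, max_eq_right zero_le_one, one_mul]
  · rw [cutoff, indicator_of_notMem fun h => hc h.1]
    exact mul_nonneg (le_max_left _ _) (inv_pos.2 (lt_max_of_lt_right (exp_pos _))).le

lemma tendsto_cutoffApprox (hs : s ∈ Icc (0 : ℝ) 1) (hx : x ≠ exp (-1)) (hx₁ : x ≤ 1) :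
    Tendsto (fun δ => cutoffApprox s δ x) (𝓝[>] 0) (𝓝 (cutoff x)) := by
  refine tendsto_const_nhds.congr' ?_
  rcases hx.lt_or_gt with hlt | hgt
  · filter_upwards [Ioo_mem_nhdsGT (sub_pos.2 hlt)] with δ ⟨hδ, hδx⟩
    have : s + (x - exp (-1)) / δ ≤ 0 := by
      have : (x - exp (-1)) / δ ≤ -1 := by rw [div_le_iff₀ hδ]; linarith
      linarith [hs.2]
    rw [cutoff, indicator_of_notMem fun h => hlt.not_ge h.1, cutoffApprox,
      max_eq_left ((min_le_right _ _).trans this), zero_mul]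
  · filter_upwards [Ioo_mem_nhdsGT (sub_pos.2 hgt)] with δ ⟨hδ, hδx⟩
    have : 1 ≤ s + (x - exp (-1)) / δ := by
      have : 1 ≤ (x - exp (-1)) / δ := by rw [le_div_iff₀ hδ]; linarith
      linarith [hs.1]
    rw [cutoff, indicator_of_mem (mem_Icc.2 ⟨hgt.le, hx₁⟩), cutoffApprox, min_eq_left this,
      max_eq_right zero_le_one, one_mul, max_eq_left hgt.le]

lemma abs_cutoff_le (x : ℝ) : |cutoff x| ≤ exp 1 := by
  by_cases hx : x ∈ Icc (exp (-1)) 1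
  · have hx₀ : 0 < x := (exp_pos _).trans_le hx.1
    rw [cutoff, indicator_of_mem hx, abs_of_pos (inv_pos.2 hx₀), ← inv_inv (exp 1), ← exp_neg]
    exact inv_anti₀ (exp_pos _) hx.1
  · rw [cutoff, indicator_of_notMem hx, abs_zero]
    exact (exp_pos _).le

lemma integral_cutoff : ∫ x in (0 : ℝ)..1, cutoff x = 1 := by
  have hc : exp (-1) ≤ 1 := exp_le_one_iff.2 (by norm_num)
  rw [intervalIntegral.integral_of_le zero_le_one, cutoff,
    setIntegral_indicator measurableSet_Icc,
    inter_eq_right.2 (Icc_subset_Ioc (exp_pos _) le_rfl), integral_Icc_eq_integral_Ioc,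
    ← intervalIntegral.integral_of_le hc, integral_inv_of_pos (exp_pos _) one_pos,
    one_div, log_inv, log_exp, neg_neg]

lemma tendsto_integral_cutoffApprox (hs : s ∈ Icc (0 : ℝ) 1) :
    Tendsto (fun δ => ∫ x in (0 : ℝ)..1, cutoffApprox s δ x) (𝓝[>] 0) (𝓝 1) := by
  have hlim : ∀ᵐ x, x ∈ uIoc (0 : ℝ) 1 →
      Tendsto (fun δ => cutoffApprox s δ x) (𝓝[>] 0) (𝓝 (cutoff x)) := by
    filter_upwards [Measure.ae_ne volume (exp (-1))] with x hx hx₁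
    rw [uIoc_of_le zero_le_one] at hx₁
    exact tendsto_cutoffApprox hs hx hx₁.2
  simpa only [integral_cutoff] using
    intervalIntegral.tendsto_integral_filter_of_dominated_convergence (fun _ => exp 1)
      (Eventually.of_forall fun δ => (continuous_cutoffApprox s δ).aestronglyMeasurable)
      (Eventually.of_forall fun δ => ae_of_all _ fun x _ => abs_cutoffApprox_le s δ x)
      intervalIntegrable_const hlim

lemma exp_mul_cutoff_exp (hτ : 0 < τ) (l : ℝ) :
    exp (-τ * l) * cutoff (exp (-τ * l)) = indicator (Icc 0 τ⁻¹) 1 l := by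
  have hmem : exp (-τ * l) ∈ Icc (exp (-1)) 1 ↔ l ∈ Icc 0 τ⁻¹ := by
    rw [mem_Icc, mem_Icc, exp_le_exp, exp_le_one_iff, ← one_div, le_div_iff₀ hτ]
    constructor <;> rintro ⟨h₁, h₂⟩ <;> constructor <;> nlinarith
  by_cases hl : l ∈ Icc 0 τ⁻¹
  · rw [cutoff, indicator_of_mem (hmem.2 hl), indicator_of_mem hl, mul_inv_cancel₀ (exp_pos _).ne',
      Pi.one_apply]
  · rw [cutoff, indicator_of_notMem (mt hmem.1 hl), indicator_of_notMem hl, mul_zero]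

lemma transform_cutoff (hτ : 0 < τ) : transform μ cutoff τ = τ * μ.real (Icc 0 τ⁻¹) := by
  simp only [transform, exp_mul_cutoff_exp hτ]
  rw [integral_indicator_one measurableSet_Icc, measureReal_restrict_apply measurableSet_Icc,
    inter_eq_left.2 Icc_subset_Ici_self]

theorem tendsto_mul_measureReal_Icc
    (hint : ∀ τ : ℝ, 0 < τ → IntegrableOn (fun l => exp (-τ * l)) (Ici 0) μ)
    (habel : Tendsto (transform μ 1) (𝓝[>] 0) (𝓝 A)) :
    Tendsto (fun τ => τ * μ.real (Icc 0 τ⁻¹)) (𝓝[>] 0) (𝓝 A) := by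
  have hcutoff := tendsto_transform_of_squeeze hint
    (fun τ hτ => integrableOn_transform_of_bounded hint hτ
      (measurable_inv.indicator measurableSet_Icc) fun x _ => abs_cutoff_le x)
    (continuous_cutoffApprox 0) (continuous_cutoffApprox 1)
    (fun δ => tendsto_transform_of_continuous hint habel (continuous_cutoffApprox 0 δ))
    (fun δ => tendsto_transform_of_continuous hint habel (continuous_cutoffApprox 1 δ))
    (by filter_upwards [self_mem_nhdsWithin] with δ (hδ : 0 < δ) x hx using
      ⟨cutoffApprox_zero_le hδ hx, cutoff_le_cutoffApprox_one hδ hx⟩)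
    (tendsto_integral_cutoffApprox (by simp)) (tendsto_integral_cutoffApprox (by simp))
  rw [mul_one] at hcutoff
  refine hcutoff.congr' ?_
  filter_upwards [self_mem_nhdsWithin] with τ (hτ : 0 < τ) using transform_cutoff hτ

end Karamata

theorem karamata_tauberian_general (f : StieltjesFunction ℝ)
    (A : ℝ)
    (hint : ∀ τ : ℝ, 0 < τ →
      IntegrableOn (fun l => Real.exp (-τ * l)) (Set.Ici 0) f.measure)
    (habel : Tendsto (fun τ : ℝ => τ * ∫ l in Set.Ici (0:ℝ), Real.exp (-τ * l) ∂f.measure)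
      (𝓝[>] 0) (𝓝 A)) :
    Tendsto (fun Λ : ℝ => f Λ / Λ) atTop (𝓝 A) := by
  have hcount := (Karamata.tendsto_mul_measureReal_Icc hint
    (Karamata.transform_one ▸ habel)).comp tendsto_inv_atTop_nhdsGT_zero
  have hconst : Tendsto (fun Λ : ℝ => Function.leftLim f 0 * Λ⁻¹) atTop (𝓝 0) := by
    simpa using tendsto_inv_atTop_zero.const_mul (Function.leftLim f 0)
  refine (add_zero A ▸ hcount.add hconst).congr' ?_
  filter_upwards [eventually_gt_atTop 0] with Λ hΛ
  rw [Function.comp_apply, inv_inv, measureReal_def, f.measure_Icc,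
    ENNReal.toReal_ofReal (sub_nonneg.2 (f.mono.leftLim_le hΛ.le))]
  field_simp
  ring

/-- Karamata's Tauberian theorem (index 1): if the Laplace–Stieltjes transform of a
nonnegative nondecreasing `f` satisfies `τ ∫₀^∞ e^{-τλ} df(λ) → A` as `τ → 0⁺`,
then `f(Λ)/Λ → A` as `Λ → ∞`. -/
theorem karamata_tauberian (f : StieltjesFunction ℝ) (hpos : ∀ x : ℝ, 0 ≤ x → 0 ≤ f x)
    (A : ℝ)
    (hint : ∀ τ : ℝ, 0 < τ →
      IntegrableOn (fun l => Real.exp (-τ * l)) (Set.Ici 0) f.measure)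
    (habel : Tendsto (fun τ : ℝ => τ * ∫ l in Set.Ici (0:ℝ), Real.exp (-τ * l) ∂f.measure)
      (𝓝[>] 0) (𝓝 A)) :
    Tendsto (fun Λ : ℝ => f Λ / Λ) atTop (𝓝 A) :=
  karamata_tauberian_general f A hint habel
end

section
/- Let Γ be a group with a finite symmetric generating set, and let d be the associated word metric, with balls B_R = {g : d(g,e) ≤ R}. Suppose a family of maps F_g : X → X (g ∈ Γ) on a measure space (X, m), with F_g ∘ F_h = F_{gh}, has the equidistribution property: for every x₀ ∈ X and all bounded measurable U, V ⊆ X with m(V) > 0, |{g ∈ B_R : F_g(x₀) ∈ U}| / |{g ∈ B_R : F_g(x₀) ∈ V}| → m(U)/m(V) as R → ∞. Then any finite F_Γ-invariant measure ν on X that is absolutely continuous with bounded density with respect to m and for which the equidistribution counts are positive for all large R must satisfy: for all bounded measurable U, V with m(V) > 0 and ν(V) > 0, ν(U)/ν(V) = m(U)/m(V). -/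
open MeasureTheory Filter Topology ENNReal

/-!
Averaging the counting functions `x ↦ #{g ∈ B_R | F_g x ∈ A}` against `ν` gives `|B_R| · ν(A)`,
by invariance of `ν`. Normalised by `|B_R|`, the counts for `U` and `V` are bounded by `1` and,
by equidistribution, their ratio tends to `m(U)/m(V)` at every point; dominated convergence then
gives `ν(U) - (m(U)/m(V)) ν(V) = 0`.
-/

theorem finite_setOf_exists_list_prod {M : Type*} [Monoid M] (S : Finset M) (R : ℕ) :
    {g : M | ∃ l : List M, (∀ x ∈ l, x ∈ S) ∧ l.length ≤ R ∧ l.prod = g}.Finite := by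
  refine ((List.finite_length_le S R).image fun l => (l.map Subtype.val).prod).subset ?_
  rintro g ⟨l, hlS, hlR, rfl⟩
  lift l to List S using hlS
  exact ⟨l, by simpa using hlR, rfl⟩

theorem ENNReal.div_eq_div_of_toReal_div_eq {a b c d : ℝ≥0∞} (ha : a ≠ ∞) (hb : b ≠ 0)
    (hc : c ≠ ∞) (hd : d ≠ 0) (h : a.toReal / b.toReal = c.toReal / d.toReal) :
    a / b = c / d := by
  rwa [← ENNReal.toReal_eq_toReal_iff' (ENNReal.div_ne_top ha hb) (ENNReal.div_ne_top hc hd),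
    ENNReal.toReal_div, ENNReal.toReal_div]

theorem tendsto_sub_mul_of_tendsto_div {ι : Type*} {l : Filter ι} {a b : ι → ℝ} {c : ℝ}
    (hb : ∀ i, |b i| ≤ 1) (hb0 : ∀ᶠ i in l, b i ≠ 0)
    (h : Tendsto (fun i => a i / b i) l (𝓝 c)) :
    Tendsto (fun i => a i - c * b i) l (𝓝 0) := by
  refine squeeze_zero_norm' ?_ (tendsto_iff_norm_sub_tendsto_zero.1 h)
  filter_upwards [hb0] with i hi
  calc ‖a i - c * b i‖ = |b i| * ‖a i / b i - c‖ := by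
        rw [Real.norm_eq_abs, Real.norm_eq_abs, ← abs_mul, mul_sub, mul_div_cancel₀ _ hi, mul_comm]
    _ ≤ ‖a i / b i - c‖ := mul_le_of_le_one_left (norm_nonneg _) (hb i)

theorem tendsto_integral_sub_mul_integral_of_tendsto_div {ι X : Type*} [MeasurableSpace X]
    {ν : Measure X} [IsFiniteMeasure ν] {l : Filter ι} [l.IsCountablyGenerated]
    {u v : ι → X → ℝ} {c : ℝ}
    (hu : ∀ i, AEStronglyMeasurable (u i) ν) (hv : ∀ i, AEStronglyMeasurable (v i) ν)
    (hu1 : ∀ i x, |u i x| ≤ 1) (hv1 : ∀ i x, |v i x| ≤ 1)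
    (hv0 : ∀ x, ∀ᶠ i in l, v i x ≠ 0)
    (h : ∀ x, Tendsto (fun i => u i x / v i x) l (𝓝 c)) :
    Tendsto (fun i => ∫ x, u i x ∂ν - c * ∫ x, v i x ∂ν) l (𝓝 0) := by
  have hui i : Integrable (u i) ν := .of_bound (hu i) 1 (.of_forall (hu1 i))
  have hvi i : Integrable (v i) ν := .of_bound (hv i) 1 (.of_forall (hv1 i))
  have hbound i x : ‖u i x - c * v i x‖ ≤ 1 + |c| := calc
    ‖u i x - c * v i x‖ ≤ |u i x| + |c| * |v i x| := by
      rw [Real.norm_eq_abs, ← abs_mul]; exact abs_sub _ _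
    _ ≤ 1 + |c| * 1 := by gcongr <;> simp [hu1, hv1]
    _ = 1 + |c| := by ring
  have hlim := tendsto_integral_filter_of_dominated_convergence (μ := ν)
    (F := fun i x => u i x - c * v i x) (f := 0) (fun _ => 1 + |c|)
    (.of_forall fun i => (hu i).sub ((hv i).const_mul c))
    (.of_forall fun i => .of_forall (hbound i)) (integrable_const _)
    (.of_forall fun x => tendsto_sub_mul_of_tendsto_div (hv1 · x) (hv0 x) (h x))
  simpa [integral_sub (hui _) ((hvi _).const_mul c), integral_const_mul] using hlim

section CardFilterMem

open Finset
open scoped Classical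

variable {ι X : Type*}

theorem natCast_card_filter_mem_eq_sum_indicator (T : Finset ι) (F : ι → X → X) (A : Set X)
    (x : X) : (#{g ∈ T | F g x ∈ A} : ℝ) = ∑ g ∈ T, (F g ⁻¹' A).indicator 1 x := by
  rw [card_filter]
  push_cast
  simp [Set.indicator_apply]

variable [MeasurableSpace X]

theorem measurable_card_filter_mem (T : Finset ι) {F : ι → X → X}
    (hF : ∀ g ∈ T, Measurable (F g)) {A : Set X} (hA : MeasurableSet A) :
    Measurable fun x => (#{g ∈ T | F g x ∈ A} : ℝ) := by
  simp_rw [natCast_card_filter_mem_eq_sum_indicator]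
  exact Finset.measurable_sum _ fun g hg => measurable_const.indicator (hF g hg hA)

theorem integral_card_filter_mem (ν : Measure X) [IsFiniteMeasure ν] (T : Finset ι)
    {F : ι → X → X} (hF : ∀ g ∈ T, Measurable (F g)) {A : Set X} (hA : MeasurableSet A)
    (hinv : ∀ g ∈ T, ν (F g ⁻¹' A) = ν A) :
    ∫ x, (#{g ∈ T | F g x ∈ A} : ℝ) ∂ν = #T * ν.real A := by
  simp_rw [natCast_card_filter_mem_eq_sum_indicator]
  rw [integral_finsetSum _ fun g hg => (integrable_const 1).indicator (hF g hg hA)]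
  simp +contextual [integral_indicator_one (hF _ _ hA), measureReal_def, hinv]

theorem measureReal_eq_mul_of_tendsto_card_filter_mem_div {κ : Type*} {l : Filter κ} [l.NeBot]
    [l.IsCountablyGenerated] (ν : Measure X) [IsFiniteMeasure ν] (T : κ → Finset ι)
    (hT : ∀ R, (T R).Nonempty) {F : ι → X → X} (hF : ∀ g, Measurable (F g)) {U V : Set X}
    (hU : MeasurableSet U) (hV : MeasurableSet V) (hinvU : ∀ g, ν (F g ⁻¹' U) = ν U)
    (hinvV : ∀ g, ν (F g ⁻¹' V) = ν V) {c : ℝ}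
    (hpos : ∀ x, ∀ᶠ R in l, #{g ∈ T R | F g x ∈ V} ≠ 0)
    (hlim : ∀ x, Tendsto (fun R => (#{g ∈ T R | F g x ∈ U} : ℝ) / #{g ∈ T R | F g x ∈ V}) l
      (𝓝 c)) :
    ν.real U = c * ν.real V := by
  set frac : Set X → κ → X → ℝ := fun A R x => #{g ∈ T R | F g x ∈ A} / #(T R)
  have hT0 R : (#(T R) : ℝ) ≠ 0 := by exact_mod_cast (hT R).card_ne_zero
  have hmeas A (hA : MeasurableSet A) R : AEStronglyMeasurable (frac A R) ν :=
    ((measurable_card_filter_mem _ (fun g _ => hF g) hA).div_const _).aestronglyMeasurable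
  have hle A R x : |frac A R x| ≤ 1 := by
    rw [abs_of_nonneg (by positivity)]
    exact div_le_one_of_le₀ (by exact_mod_cast card_filter_le _ _) (Nat.cast_nonneg _)
  have hint A (hA : MeasurableSet A) (hinv : ∀ g, ν (F g ⁻¹' A) = ν A) R :
      ∫ x, frac A R x ∂ν = ν.real A := by
    rw [integral_div, integral_card_filter_mem ν _ (fun g _ => hF g) hA (fun g _ => hinv g),
      mul_div_cancel_left₀ _ (hT0 R)]
  have hdiff := tendsto_integral_sub_mul_integral_of_tendsto_div (hmeas U hU) (hmeas V hV)
    (hle U) (hle V) (c := c)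
    (fun x => (hpos x).mono fun R hR => div_ne_zero (by exact_mod_cast hR) (hT0 R))
    (fun x => by simpa only [frac, div_div_div_cancel_right₀ (hT0 _)] using hlim x)
  simp only [hint U hU hinvU, hint V hV hinvV] at hdiff
  exact sub_eq_zero.1 (tendsto_nhds_unique tendsto_const_nhds hdiff)

end CardFilterMem

theorem equidistribution_rigidity_general
    {Γ X : Type*} [Group Γ] [MeasurableSpace X]
    (S : Finset Γ)
    (B : ℕ → Set Γ)
    (hB : ∀ R : ℕ, B R =
      {g : Γ | ∃ l : List Γ, (∀ x ∈ l, x ∈ S) ∧ l.length ≤ R ∧ l.prod = g})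
    (F : Γ → X → X) (hmeas : ∀ g, Measurable (F g))
    (m : Measure X)
    (hequi : ∀ x₀ : X, ∀ U V : Set X, MeasurableSet U → MeasurableSet V →
      m U < ⊤ → 0 < m V → m V < ⊤ →
      Tendsto (fun R : ℕ =>
          (Nat.card {g : Γ // g ∈ B R ∧ F g x₀ ∈ U} : ℝ) /
            (Nat.card {g : Γ // g ∈ B R ∧ F g x₀ ∈ V} : ℝ)) atTop
        (𝓝 ((m U).toReal / (m V).toReal)))
    (hpos : ∀ x₀ : X, ∀ V : Set X, MeasurableSet V → 0 < m V → m V < ⊤ →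
      ∀ᶠ R in atTop, 0 < Nat.card {g : Γ // g ∈ B R ∧ F g x₀ ∈ V})
    (ν : Measure X) [IsFiniteMeasure ν]
    (hinv : ∀ g : Γ, ∀ A : Set X, MeasurableSet A → ν (F g ⁻¹' A) = ν A) :
    ∀ U V : Set X, MeasurableSet U → MeasurableSet V →
      m U < ⊤ → 0 < m V → m V < ⊤ → 0 < ν V →
      ν U / ν V = m U / m V := by
  classical
  intro U V hU hV hmU hmV0 hmVtop hνV
  have hfin R : (B R).Finite := hB R ▸ finite_setOf_exists_list_prod S R
  have hone R : (1 : Γ) ∈ (hfin R).toFinset := by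
    rw [Set.Finite.mem_toFinset, hB R]
    exact ⟨[], by simp⟩
  have hcard R x (A : Set X) : Nat.card {g // g ∈ B R ∧ F g x ∈ A} =
      Finset.card {g ∈ (hfin R).toFinset | F g x ∈ A} := by
    simp only [← Set.ncard_coe_finset, Finset.coe_filter, Set.Finite.mem_toFinset]
    rfl
  have key := measureReal_eq_mul_of_tendsto_card_filter_mem_div ν (fun R => (hfin R).toFinset)
    (fun R => ⟨1, hone R⟩) hmeas hU hV (hinv · U hU) (hinv · V hV)
    (fun x => by simpa only [hcard, pos_iff_ne_zero] using hpos x V hV hmV0 hmVtop)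
    (fun x => by simpa only [hcard] using hequi x U V hU hV hmU hmV0 hmVtop)
  have hνV' : (ν V).toReal ≠ 0 := (ENNReal.toReal_pos hνV.ne' (measure_ne_top ν V)).ne'
  refine ENNReal.div_eq_div_of_toReal_div_eq (measure_ne_top ν U) hνV.ne' hmU.ne hmV0.ne' ?_
  rw [← measureReal_def, ← measureReal_def, key, measureReal_def, mul_div_cancel_right₀ _ hνV']

theorem equidistribution_rigidity
    {Γ X : Type*} [Group Γ] [MeasurableSpace X]
    (S : Finset Γ) (hsym : ∀ s ∈ S, s⁻¹ ∈ S)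
    (hgen : Subgroup.closure (S : Set Γ) = ⊤)
    (B : ℕ → Set Γ)
    (hB : ∀ R : ℕ, B R =
      {g : Γ | ∃ l : List Γ, (∀ x ∈ l, x ∈ S) ∧ l.length ≤ R ∧ l.prod = g})
    (F : Γ → X → X) (hmeas : ∀ g, Measurable (F g))
    (hhom : ∀ g h : Γ, F g ∘ F h = F (g * h))
    (m : Measure X)
    (hequi : ∀ x₀ : X, ∀ U V : Set X, MeasurableSet U → MeasurableSet V →
      m U < ⊤ → 0 < m V → m V < ⊤ →
      Tendsto (fun R : ℕ =>
          (Nat.card {g : Γ // g ∈ B R ∧ F g x₀ ∈ U} : ℝ) /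
            (Nat.card {g : Γ // g ∈ B R ∧ F g x₀ ∈ V} : ℝ)) atTop
        (𝓝 ((m U).toReal / (m V).toReal)))
    (hpos : ∀ x₀ : X, ∀ V : Set X, MeasurableSet V → 0 < m V → m V < ⊤ →
      ∀ᶠ R in atTop, 0 < Nat.card {g : Γ // g ∈ B R ∧ F g x₀ ∈ V})
    (ν : Measure X) [IsFiniteMeasure ν]
    (hinv : ∀ g : Γ, ∀ A : Set X, MeasurableSet A → ν (F g ⁻¹' A) = ν A)
    (hac : ∃ C : ℝ≥0∞, C ≠ ⊤ ∧ ∃ ρ : X → ℝ≥0∞, Measurable ρ ∧ (∀ x, ρ x ≤ C) ∧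
      ν = m.withDensity ρ) :
    ∀ U V : Set X, MeasurableSet U → MeasurableSet V →
      m U < ⊤ → 0 < m V → m V < ⊤ → 0 < ν V →
      ν U / ν V = m U / m V :=
  equidistribution_rigidity_general S B hB F hmeas m hequi hpos ν hinv
end
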